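/- arXiv:1207.0325 — 5 statements merged into one kernel-verified Lean document; each statement's English description precedes it below -/
import Mathlib

section
/- Let 𝔤 be a finite-dimensional real Lie algebra. Let ℋ and 𝒦 be Lie subalgebras of 𝔤 with ℋ nilpotent and ⁅ℋ, 𝒦⁆ = 0. Suppose 𝒦 is the internal direct sum 𝒦 = 𝒯₁ ⊕ 𝒦*, where 𝒯₁ is a linear subspace contained in the center of 𝒦 and 𝒦* is a Lie subalgebra of 𝒦, and let 𝔞₀ be a Cartan subalgebra of 𝒦*. Suppose further that there exist h₀ ∈ ℋ and linear subspaces 𝒮, 𝒰 of 𝔤, each mapped into itself by ad(h₀) with ad(h₀) injective on each of them, such that 𝔤 is the internal direct sum of subspaces 𝔤 = ℋ ⊕ 𝒦 ⊕ 𝒮 ⊕ 𝒰. Then the subspace ℋ + 𝔞₀ + 𝒯₁ is a Cartan subalgebra of 𝔤. -/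
/-!
Write `C = ℋ + 𝔞₀ + 𝒯₁`. The three summands commute pairwise, so `C` is the image of the nilpotent
Lie algebra `ℋ × 𝔞₀ × 𝒯₁` under `(h, a, t) ↦ h + a + t`, hence a nilpotent subalgebra.
If `x` normalizes `C`, then `⁅h₀, x⁆ ∈ C ⊆ ℋ ⊕ 𝒦`; since `ad h₀` preserves each of the four
summands of `𝔤` and is injective on `𝒮 ⊕ 𝒰`, the `𝒮`- and `𝒰`-components of `x` vanish.
Writing `x = h + t + k` with `k ∈ 𝒦*`, the bracket of `x` with `𝔞₀` only sees `k`, and lands in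
`C ∩ 𝒦* = 𝔞₀`; so `k` normalizes `𝔞₀` in `𝒦*`, whence `k ∈ 𝔞₀` and `x ∈ C`.
-/

open LieAlgebra

namespace LieHom

variable {R L₁ L₂ L : Type*} [CommRing R] [LieRing L₁] [LieAlgebra R L₁] [LieRing L₂]
  [LieAlgebra R L₂] [LieRing L] [LieAlgebra R L]

def coprodOfLieEqZero (f : L₁ →ₗ⁅R⁆ L) (g : L₂ →ₗ⁅R⁆ L) (h : ∀ x y, ⁅f x, g y⁆ = 0) :
    L₁ × L₂ →ₗ⁅R⁆ L where
  toLinearMap := f.toLinearMap.coprod g.toLinearMap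
  map_lie' := by
    rintro ⟨x₁, x₂⟩ ⟨y₁, y₂⟩
    have h' : ⁅g x₂, f y₁⁆ = 0 := by rw [← lie_skew, h, neg_zero]
    simp [h, h']

theorem range_coprodOfLieEqZero (f : L₁ →ₗ⁅R⁆ L) (g : L₂ →ₗ⁅R⁆ L) (h : ∀ x y, ⁅f x, g y⁆ = 0) :
    (coprodOfLieEqZero f g h).range.toSubmodule = f.range.toSubmodule ⊔ g.range.toSubmodule := by
  simp only [range_toSubmodule]
  exact LinearMap.range_coprod _ _

end LieHom

theorem LieAlgebra.Prod.isNilpotent (R : Type*) {L₁ L₂ : Type*} [CommRing R] [LieRing L₁]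
    [LieAlgebra R L₁] [LieRing L₂] [LieAlgebra R L₂] [h₁ : LieRing.IsNilpotent L₁]
    [h₂ : LieRing.IsNilpotent L₂] : LieRing.IsNilpotent (L₁ × L₂) := by
  obtain ⟨k₁, hk₁⟩ := (LieModule.isNilpotent_iff R L₁ L₁).mp h₁
  obtain ⟨k₂, hk₂⟩ := (LieModule.isNilpotent_iff R L₂ L₂).mp h₂
  rw [LieRing.IsNilpotent, LieModule.isNilpotent_iff R]
  refine ⟨k₁ + k₂, eq_bot_iff.mpr fun x hx => ?_⟩
  have hx₁ := LieIdeal.map_lowerCentralSeries_le (k₁ + k₂) (f := LieHom.fst R L₁ L₂)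
    (LieIdeal.mem_map hx)
  have hx₂ := LieIdeal.map_lowerCentralSeries_le (k₁ + k₂) (f := LieHom.snd R L₁ L₂)
    (LieIdeal.mem_map hx)
  have e₁ := LieModule.antitone_lowerCentralSeries R L₁ L₁ (Nat.le_add_right k₁ k₂) hx₁
  have e₂ := LieModule.antitone_lowerCentralSeries R L₂ L₂ (Nat.le_add_left k₂ k₁) hx₂
  rw [hk₁, LieSubmodule.mem_bot] at e₁
  rw [hk₂, LieSubmodule.mem_bot] at e₂
  exact (LieSubmodule.mem_bot x).mpr (Prod.ext e₁ e₂)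

theorem LinearMap.disjoint_sup_ker {R M : Type*} [Ring R] [AddCommGroup M] [Module R M]
    {f : M →ₗ[R] M} {S U : Submodule R M} (hS : S ≤ S.comap f) (hU : U ≤ U.comap f)
    (hSU : Disjoint S U) (hSker : Disjoint S (ker f)) (hUker : Disjoint U (ker f)) :
    Disjoint (S ⊔ U) (ker f) := by
  rw [disjoint_ker] at *
  intro x hx hfx
  obtain ⟨s, hs, u, hu, rfl⟩ := Submodule.mem_sup.mp hx
  rw [map_add] at hfx
  have hfs : f s = 0 := Submodule.disjoint_def.mp hSU _ (hS hs)
    (by rw [eq_neg_of_add_eq_zero_left hfx]; exact U.neg_mem (hU hu))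
  rw [hfs, zero_add] at hfx
  rw [hSker s hs hfs, hUker u hu hfx, add_zero]

theorem sup_sup_inf_eq_of_disjoint {α : Type*} [Lattice α] [OrderBot α] [IsModularLattice α]
    {h a t k k' : α} (hak' : a ≤ k') (hk'k : k' ≤ k) (htk : t ≤ k) (hhk : Disjoint h k)
    (htk' : Disjoint t k') : (h ⊔ a ⊔ t) ⊓ k' = a := by
  have hatk : (a ⊔ t) ⊓ k' = a := by rw [sup_inf_assoc_of_le t hak', htk'.eq_bot, sup_bot_eq]
  rw [← inf_eq_right.mpr hk'k, ← inf_assoc, sup_assoc, sup_comm,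
    sup_inf_assoc_of_le h (sup_le (hak'.trans hk'k) htk), hhk.eq_bot, sup_bot_eq, hatk]

namespace LieSubalgebra

variable {R L : Type*} [CommRing R] [LieRing L] [LieAlgebra R L]

def ofLieEqZero (T : Submodule R L) (hT : ∀ x ∈ T, ∀ y ∈ T, ⁅x, y⁆ = 0) : LieSubalgebra R L where
  __ := T
  lie_mem' hx hy := by rw [hT _ hx _ hy]; exact T.zero_mem

instance (T : Submodule R L) (hT : ∀ x ∈ T, ∀ y ∈ T, ⁅x, y⁆ = 0) :
    IsLieAbelian (ofLieEqZero T hT) :=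
  ⟨fun x y => Subtype.ext (hT _ x.2 _ y.2)⟩

theorem map_incl_le (K : LieSubalgebra R L) (K' : LieSubalgebra R K) : K'.map K.incl ≤ K :=
  fun _ ⟨y, _, hy⟩ => hy ▸ y.2

section Commuting

variable {P Q : LieSubalgebra R L}

theorem sup_eq_range_coprodOfLieEqZero (h : ∀ x ∈ P, ∀ y ∈ Q, ⁅x, y⁆ = 0) :
    P ⊔ Q = (LieHom.coprodOfLieEqZero P.incl Q.incl fun x y => h x x.2 y y.2).range := by
  have hrange := LieHom.range_coprodOfLieEqZero P.incl Q.incl fun x y => h x x.2 y y.2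
  rw [incl_range, incl_range] at hrange
  refine le_antisymm (sup_le ?_ ?_) ?_ <;> rw [← toSubmodule_le_toSubmodule, hrange]
  · exact le_sup_left
  · exact le_sup_right
  · exact sup_le ((toSubmodule_le_toSubmodule _ _).mpr le_sup_left)
      ((toSubmodule_le_toSubmodule _ _).mpr le_sup_right)

theorem toSubmodule_sup_of_lie_eq_zero (h : ∀ x ∈ P, ∀ y ∈ Q, ⁅x, y⁆ = 0) :
    (P ⊔ Q).toSubmodule = P.toSubmodule ⊔ Q.toSubmodule := by
  have hrange := LieHom.range_coprodOfLieEqZero P.incl Q.incl fun x y => h x x.2 y y.2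
  rwa [incl_range, incl_range, ← sup_eq_range_coprodOfLieEqZero h] at hrange

theorem isNilpotent_sup_of_lie_eq_zero [LieRing.IsNilpotent P] [LieRing.IsNilpotent Q]
    (h : ∀ x ∈ P, ∀ y ∈ Q, ⁅x, y⁆ = 0) : LieRing.IsNilpotent ↥(P ⊔ Q) := by
  have := LieAlgebra.Prod.isNilpotent R (L₁ := P) (L₂ := Q)
  rw [sup_eq_range_coprodOfLieEqZero h]
  exact LieHom.isNilpotent_range _

theorem lie_eq_zero_of_mem_sup {N : Submodule R L} (h : ∀ x ∈ P, ∀ y ∈ Q, ⁅x, y⁆ = 0)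
    (hP : ∀ x ∈ P, ∀ z ∈ N, ⁅x, z⁆ = 0) (hQ : ∀ y ∈ Q, ∀ z ∈ N, ⁅y, z⁆ = 0) :
    ∀ x ∈ P ⊔ Q, ∀ z ∈ N, ⁅x, z⁆ = 0 := by
  intro x hx z hz
  rw [← mem_toSubmodule, toSubmodule_sup_of_lie_eq_zero h, Submodule.mem_sup] at hx
  obtain ⟨p, hp, q, hq, rfl⟩ := hx
  rw [add_lie, hP p hp z hz, hQ q hq z hz, add_zero]

theorem exists_isNilpotent_toSubmodule_eq_sup [LieRing.IsNilpotent P] [LieRing.IsNilpotent Q]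
    {T : Submodule R L} (hPQ : ∀ x ∈ P, ∀ y ∈ Q, ⁅x, y⁆ = 0)
    (hPT : ∀ x ∈ P, ∀ t ∈ T, ⁅x, t⁆ = 0) (hQT : ∀ y ∈ Q, ∀ t ∈ T, ⁅y, t⁆ = 0)
    (hT : ∀ t ∈ T, ∀ t' ∈ T, ⁅t, t'⁆ = 0) :
    ∃ C : LieSubalgebra R L,
      LieRing.IsNilpotent C ∧ C.toSubmodule = P.toSubmodule ⊔ Q.toSubmodule ⊔ T := by
  have hPQT : ∀ x ∈ P ⊔ Q, ∀ t ∈ ofLieEqZero T hT, ⁅x, t⁆ = 0 :=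
    lie_eq_zero_of_mem_sup hPQ hPT hQT
  have := isNilpotent_sup_of_lie_eq_zero hPQ
  refine ⟨P ⊔ Q ⊔ ofLieEqZero T hT, isNilpotent_sup_of_lie_eq_zero hPQT, ?_⟩
  rw [toSubmodule_sup_of_lie_eq_zero hPQT, toSubmodule_sup_of_lie_eq_zero hPQ]
  rfl

end Commuting

theorem comap_normalizer_map_le {L' : Type*} [LieRing L'] [LieAlgebra R L'] {f : L' →ₗ⁅R⁆ L}
    (hf : Function.Injective f) (K : LieSubalgebra R L') :
    (K.map f).normalizer.comap f ≤ K.normalizer := by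
  intro x hx
  rw [mem_normalizer_iff]
  intro y hy
  obtain ⟨z, hz, hzf⟩ := (mem_map f K _).mp
    ((mem_normalizer_iff _ _).mp hx (f y) ((mem_map f K _).mpr ⟨y, hy, rfl⟩))
  rwa [← hf (hzf.trans (f.map_lie x y).symm)]

theorem normalizer_le_of_disjoint {C : LieSubalgebra R L} {V W : Submodule R L} {x₀ : L}
    (hx₀ : x₀ ∈ C) (hCV : C.toSubmodule ≤ V) (hV : V ≤ V.comap (ad R L x₀))
    (hW : W ≤ W.comap (ad R L x₀)) (hWker : Disjoint W (LinearMap.ker (ad R L x₀)))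
    (hVW : Disjoint V W) (hVWtop : V ⊔ W = ⊤) : C.normalizer.toSubmodule ≤ V := by
  intro x hx
  obtain ⟨v, hv, w, hw, rfl⟩ := Submodule.mem_sup.mp (hVWtop ▸ Submodule.mem_top : x ∈ V ⊔ W)
  have hx₀x : ⁅x₀, v + w⁆ ∈ V := by
    rw [← lie_skew]
    exact V.neg_mem (hCV ((mem_normalizer_iff _ _).mp hx x₀ hx₀))
  have hx₀w : ⁅x₀, w⁆ ∈ V := by
    rw [lie_add] at hx₀x
    simpa using V.sub_mem hx₀x (hV hv)
  have hw₀ : w = 0 := LinearMap.disjoint_ker.mp hWker w hw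
    (Submodule.disjoint_def.mp hVW _ hx₀w (hW hw))
  rwa [hw₀, add_zero]

theorem normalizer_le_of_iSupIndep {C : LieSubalgebra R L} {V₁ V₂ S U : Submodule R L} {x₀ : L}
    (hx₀ : x₀ ∈ C) (hC : C.toSubmodule ≤ V₁ ⊔ V₂)
    (hV : V₁ ⊔ V₂ ≤ (V₁ ⊔ V₂).comap (ad R L x₀)) (hS : S ≤ S.comap (ad R L x₀))
    (hU : U ≤ U.comap (ad R L x₀)) (hSker : Disjoint S (LinearMap.ker (ad R L x₀)))
    (hUker : Disjoint U (LinearMap.ker (ad R L x₀))) (hindep : iSupIndep ![V₁, V₂, S, U])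
    (hsup : V₁ ⊔ V₂ ⊔ S ⊔ U = ⊤) : C.normalizer.toSubmodule ≤ V₁ ⊔ V₂ := by
  have hVW : Disjoint (V₁ ⊔ V₂) (S ⊔ U) := by
    have := hindep.disjoint_biSup_biSup' (s := {0, 1}) (t := {2, 3})
      (by simp [Set.disjoint_left]) (Set.toFinite _)
    simpa [iSup_or, iSup_sup_eq, iSup_iSup_eq_left] using this
  have hSU : Disjoint S U := hindep.pairwiseDisjoint (show (2 : Fin 4) ≠ 3 by decide)
  refine normalizer_le_of_disjoint hx₀ hC hV
    (sup_le (hS.trans (Submodule.comap_mono le_sup_left))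
      (hU.trans (Submodule.comap_mono le_sup_right)))
    (LinearMap.disjoint_sup_ker hS hU hSU hSker hUker) hVW ?_
  rw [← sup_assoc, hsup]

theorem mem_of_mem_normalizer_of_mem_sup {C H K Kstar : LieSubalgebra R L} {T₁ : Submodule R L}
    {a : LieSubalgebra R Kstar} (ha : a.normalizer = a)
    (hC : C.toSubmodule = H.toSubmodule ⊔ (a.map Kstar.incl).toSubmodule ⊔ T₁)
    (hHK : ∀ h ∈ H, ∀ k ∈ K, ⁅h, k⁆ = 0) (hT₁K : T₁ ≤ K.toSubmodule)
    (hT₁central : ∀ t ∈ T₁, ∀ k ∈ K, ⁅t, k⁆ = 0) (hKstarK : Kstar ≤ K)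
    (hHKdisj : Disjoint H.toSubmodule K.toSubmodule) (hdisj : Disjoint T₁ Kstar.toSubmodule)
    (hsum : T₁ ⊔ Kstar.toSubmodule = K.toSubmodule) {x : L} (hx : x ∈ C.normalizer)
    (hxHK : x ∈ H.toSubmodule ⊔ K.toSubmodule) : x ∈ C := by
  set A := a.map Kstar.incl
  have hAK : A.toSubmodule ≤ K.toSubmodule := hKstarK.trans' (map_incl_le Kstar a)
  obtain ⟨h, hh, k, hk, rfl⟩ := Submodule.mem_sup.mp hxHK
  rw [← hsum] at hk
  obtain ⟨t, ht, k', hk', rfl⟩ := Submodule.mem_sup.mp hk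
  have hCKstar : C.toSubmodule ⊓ Kstar.toSubmodule = A.toSubmodule := by
    rw [hC]
    exact sup_sup_inf_eq_of_disjoint (map_incl_le Kstar a) hKstarK hT₁K hHKdisj hdisj
  have hk'N : (⟨k', hk'⟩ : Kstar) ∈ A.normalizer.comap Kstar.incl := by
    refine (mem_normalizer_iff _ _).mpr fun y hy => ?_
    have hxy : ⁅h + (t + k'), y⁆ = ⁅k', y⁆ := by
      rw [add_lie, add_lie, hHK h hh y (hAK hy), hT₁central t ht y (hAK hy), zero_add, zero_add]
    rw [← mem_toSubmodule, ← hCKstar]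
    refine ⟨hxy ▸ (mem_normalizer_iff _ _).mp hx y ?_, Kstar.lie_mem hk' (map_incl_le Kstar a hy)⟩
    rw [← mem_toSubmodule, hC]
    exact Submodule.mem_sup_left (Submodule.mem_sup_right hy)
  have hk'a := comap_normalizer_map_le Subtype.val_injective a hk'N
  rw [ha] at hk'a
  rw [← mem_toSubmodule, hC]
  exact add_mem (Submodule.mem_sup_left (Submodule.mem_sup_left hh)) (add_mem
    (Submodule.mem_sup_right ht) (Submodule.mem_sup_left (Submodule.mem_sup_right ⟨_, hk'a, rfl⟩)))

end LieSubalgebra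

theorem sum_isCartanSubalgebra_of_anosov_splitting_general
    (L : Type*) [LieRing L] [LieAlgebra ℝ L]
    (H K : LieSubalgebra ℝ L) (hHnil : LieRing.IsNilpotent ↥H)
    (hHK : ∀ h ∈ H, ∀ k ∈ K, ⁅h, k⁆ = 0)
    (T₁ : Submodule ℝ L) (hT₁K : T₁ ≤ K.toSubmodule)
    (hT₁central : ∀ t ∈ T₁, ∀ k ∈ K, ⁅t, k⁆ = 0)
    (Kstar : LieSubalgebra ℝ L) (hKstarK : Kstar ≤ K)
    (hdisj : T₁ ⊓ Kstar.toSubmodule = ⊥)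
    (hsum : T₁ ⊔ Kstar.toSubmodule = K.toSubmodule)
    (a₀ : LieSubalgebra ℝ ↥Kstar) (ha₀ : a₀.IsCartanSubalgebra)
    (h₀ : L) (hh₀ : h₀ ∈ H) (S U : Submodule ℝ L)
    (hSinv : ∀ s ∈ S, ⁅h₀, s⁆ ∈ S)
    (hSinj : Set.InjOn (fun w => ⁅h₀, w⁆) (S : Set L))
    (hUinv : ∀ u ∈ U, ⁅h₀, u⁆ ∈ U)
    (hUinj : Set.InjOn (fun w => ⁅h₀, w⁆) (U : Set L))
    (hindep : iSupIndep ![H.toSubmodule, K.toSubmodule, S, U])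
    (hsup : H.toSubmodule ⊔ K.toSubmodule ⊔ S ⊔ U = ⊤) :
    ∃ C : LieSubalgebra ℝ L,
      C.toSubmodule = H.toSubmodule ⊔ (a₀.map Kstar.incl).toSubmodule ⊔ T₁ ∧
      C.IsCartanSubalgebra := by
  have hAK : (a₀.map Kstar.incl).toSubmodule ≤ K.toSubmodule :=
    hKstarK.trans' (Kstar.map_incl_le a₀)
  have : LieRing.IsNilpotent (a₀.map Kstar.incl) :=
    (a₀.equivMapOfInjective _ Subtype.val_injective).nilpotent_iff_equiv_nilpotent.mp
      ha₀.nilpotent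
  obtain ⟨C, hCnil, hC⟩ := LieSubalgebra.exists_isNilpotent_toSubmodule_eq_sup (P := H) (T := T₁)
    (fun x hx y hy => hHK x hx y (hAK hy)) (fun x hx t ht => hHK x hx t (hT₁K ht))
    (fun y hy t ht => by rw [← lie_skew, hT₁central t ht y (hAK hy), neg_zero])
    (fun t ht t' ht' => hT₁central t ht t' (hT₁K ht'))
  refine ⟨C, hC, hCnil, le_antisymm (fun x hx => ?_) C.le_normalizer⟩
  have hCHK : C.toSubmodule ≤ H.toSubmodule ⊔ K.toSubmodule := by
    rw [hC]
    exact sup_le (sup_le le_sup_left (hAK.trans le_sup_right)) (hT₁K.trans le_sup_right)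
  have hHKinv :
      H.toSubmodule ⊔ K.toSubmodule ≤ (H.toSubmodule ⊔ K.toSubmodule).comap (ad ℝ L h₀) :=
    sup_le (fun h hh => Submodule.mem_sup_left (H.lie_mem hh₀ hh))
      fun k hk => by simp [hHK h₀ hh₀ k hk]
  have hh₀C : h₀ ∈ C := by
    rw [← LieSubalgebra.mem_toSubmodule, hC]
    exact Submodule.mem_sup_left (Submodule.mem_sup_left hh₀)
  exact LieSubalgebra.mem_of_mem_normalizer_of_mem_sup ha₀.self_normalizing hC hHK hT₁K
    hT₁central hKstarK (hindep.pairwiseDisjoint (show (0 : Fin 4) ≠ 1 by decide)) (disjoint_iff.mpr hdisj) hsum hx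
    (LieSubalgebra.normalizer_le_of_iSupIndep hh₀C hCHK hHKinv hSinv hUinv
      (LinearMap.disjoint_ker_iff_injOn.mpr hSinj) (LinearMap.disjoint_ker_iff_injOn.mpr hUinj)
      hindep hsup hx)

/-- Let `𝔤` be a finite-dimensional real Lie algebra, `ℋ, 𝒦` Lie subalgebras
with `ℋ` nilpotent and `⁅ℋ, 𝒦⁆ = 0`. Suppose `𝒦 = 𝒯₁ ⊕ 𝒦*` internally, where `𝒯₁` is a linear
subspace contained in the center of `𝒦` and `𝒦*` is a Lie subalgebra of `𝒦`, and let `𝔞₀` be a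
Cartan subalgebra of `𝒦*`. Suppose further that there exist `h₀ ∈ ℋ` and linear subspaces
`𝒮, 𝒰`, each mapped into itself by `ad h₀` with `ad h₀` injective on each of them, such that
`𝔤 = ℋ ⊕ 𝒦 ⊕ 𝒮 ⊕ 𝒰` as an internal direct sum of subspaces. Then `ℋ + 𝔞₀ + 𝒯₁` is a Cartan
subalgebra of `𝔤`. -/
theorem sum_isCartanSubalgebra_of_anosov_splitting
    (L : Type*) [LieRing L] [LieAlgebra ℝ L] [FiniteDimensional ℝ L]
    (H K : LieSubalgebra ℝ L) (hHnil : LieRing.IsNilpotent ↥H)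
    (hHK : ∀ h ∈ H, ∀ k ∈ K, ⁅h, k⁆ = 0)
    (T₁ : Submodule ℝ L) (hT₁K : T₁ ≤ K.toSubmodule)
    (hT₁central : ∀ t ∈ T₁, ∀ k ∈ K, ⁅t, k⁆ = 0)
    (Kstar : LieSubalgebra ℝ L) (hKstarK : Kstar ≤ K)
    (hdisj : T₁ ⊓ Kstar.toSubmodule = ⊥)
    (hsum : T₁ ⊔ Kstar.toSubmodule = K.toSubmodule)
    (a₀ : LieSubalgebra ℝ ↥Kstar) (ha₀ : a₀.IsCartanSubalgebra)
    (h₀ : L) (hh₀ : h₀ ∈ H) (S U : Submodule ℝ L)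
    (hSinv : ∀ s ∈ S, ⁅h₀, s⁆ ∈ S)
    (hSinj : Set.InjOn (fun w => ⁅h₀, w⁆) (S : Set L))
    (hUinv : ∀ u ∈ U, ⁅h₀, u⁆ ∈ U)
    (hUinj : Set.InjOn (fun w => ⁅h₀, w⁆) (U : Set L))
    (hindep : iSupIndep ![H.toSubmodule, K.toSubmodule, S, U])
    (hsup : H.toSubmodule ⊔ K.toSubmodule ⊔ S ⊔ U = ⊤) :
    ∃ C : LieSubalgebra ℝ L,
      C.toSubmodule = H.toSubmodule ⊔ (a₀.map Kstar.incl).toSubmodule ⊔ T₁ ∧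
      C.IsCartanSubalgebra :=
  sum_isCartanSubalgebra_of_anosov_splitting_general L H K hHnil hHK T₁ hT₁K hT₁central Kstar
    hKstarK hdisj hsum a₀ ha₀ h₀ hh₀ S U hSinv hSinj hUinv hUinj hindep hsup
end

section
/- Let 𝔤 be a finite-dimensional real Lie algebra, let ℋ be a nilpotent Lie subalgebra of 𝔤, and let h₀ ∈ ℋ. Suppose there exist linear subspaces 𝒮, 𝒰 of 𝔤, each mapped into itself by ad(h₀) with ad(h₀) injective on each of them, such that 𝔤 is the internal direct sum of subspaces 𝔤 = ℋ ⊕ 𝒮 ⊕ 𝒰. Then ℋ is a Cartan subalgebra of 𝔤. -/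
/-!
Put `W = 𝒮 ⊕ 𝒰`, a complement of `ℋ` on which `ad h₀` acts injectively. If `x = h + w` normalizes
`ℋ`, then `⁅h₀, w⁆ = ⁅h₀, x⁆ - ⁅h₀, h⁆` lies both in `ℋ` and in `W`, hence vanishes, so `w = 0`.
-/

open Set

theorem LinearMap.injOn_sup_of_disjoint_map {R M N : Type*} [Ring R] [AddCommGroup M]
    [AddCommGroup N] [Module R M] [Module R N] {f : M →ₗ[R] N} {S U : Submodule R M}
    (hS : InjOn f S) (hU : InjOn f U) (hSU : Disjoint (S.map f) (U.map f)) :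
    InjOn f ↑(S ⊔ U) := by
  rw [← disjoint_ker_iff_injOn] at hS hU ⊢
  rw [Submodule.disjoint_def] at hS hU hSU ⊢
  rintro _ hx (hfx : f _ = 0)
  obtain ⟨s, hs, u, hu, rfl⟩ := Submodule.mem_sup.mp hx
  rw [map_add, add_eq_zero_iff_eq_neg] at hfx
  have hfs : f s = 0 :=
    hSU _ (Submodule.mem_map_of_mem hs) (hfx ▸ neg_mem (Submodule.mem_map_of_mem hu))
  have hfu : f u = 0 := by rwa [hfs, zero_eq_neg] at hfx
  rw [hS s hs hfs, hU u hu hfu, add_zero]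

theorem LieSubalgebra.normalizer_le_self_of_isCompl {R L : Type*} [CommRing R] [LieRing L]
    [LieAlgebra R L] {H : LieSubalgebra R L} {W : Submodule R L} (hHW : IsCompl H.toSubmodule W)
    {x : L} (hx : x ∈ H) (hW : ∀ w ∈ W, ⁅x, w⁆ ∈ W) (hinj : InjOn (fun w => ⁅x, w⁆) (W : Set L)) :
    H.normalizer ≤ H := by
  intro y hy
  obtain ⟨h, hh, w, hw, rfl⟩ := Submodule.mem_sup.mp (hHW.sup_eq_top ▸ Submodule.mem_top (x := y))
  have hxw : ⁅x, w⁆ ∈ H := by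
    have := H.sub_mem ((H.mem_normalizer_iff' _).mp hy x hx) (H.lie_mem hx hh)
    rwa [lie_add, add_sub_cancel_left] at this
  have hxw0 : ⁅x, w⁆ = 0 := Submodule.disjoint_def.mp hHW.disjoint _ hxw (hW w hw)
  have hw0 : w = 0 := hinj hw W.zero_mem (by simpa using hxw0)
  rwa [hw0, add_zero]

theorem isCartanSubalgebra_of_anosov_splitting_general
    (L : Type*) [LieRing L] [LieAlgebra ℝ L]
    (H : LieSubalgebra ℝ L) (hHnil : LieRing.IsNilpotent ↥H)
    (h₀ : L) (hh₀ : h₀ ∈ H) (S U : Submodule ℝ L)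
    (hSinv : ∀ s ∈ S, ⁅h₀, s⁆ ∈ S)
    (hSinj : Set.InjOn (fun w => ⁅h₀, w⁆) (S : Set L))
    (hUinv : ∀ u ∈ U, ⁅h₀, u⁆ ∈ U)
    (hUinj : Set.InjOn (fun w => ⁅h₀, w⁆) (U : Set L))
    (hindep : iSupIndep ![H.toSubmodule, S, U])
    (hsup : H.toSubmodule ⊔ S ⊔ U = ⊤) :
    H.IsCartanSubalgebra := by
  obtain ⟨hH, hS, -⟩ := iSupIndep_fin_three.mp hindep
  have hcompl : IsCompl H.toSubmodule (S ⊔ U) :=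
    ⟨by simpa using hH, codisjoint_iff.mpr (by rwa [← sup_assoc])⟩
  have hmaps : ∀ w ∈ S ⊔ U, ⁅h₀, w⁆ ∈ S ⊔ U := by
    intro w hw
    obtain ⟨s, hs, u, hu, rfl⟩ := Submodule.mem_sup.mp hw
    rw [lie_add]
    exact Submodule.add_mem_sup (hSinv s hs) (hUinv u hu)
  have hinj : InjOn (fun w => ⁅h₀, w⁆) ((S ⊔ U : Submodule ℝ L) : Set L) :=
    LinearMap.injOn_sup_of_disjoint_map (f := LieAlgebra.ad ℝ L h₀) hSinj hUinj <|
      (hS.mono_right le_sup_left).mono (Submodule.map_le_iff_le_comap.mpr hSinv)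
        (Submodule.map_le_iff_le_comap.mpr hUinv)
  exact ⟨hHnil, le_antisymm (H.normalizer_le_self_of_isCompl hcompl hh₀ hmaps hinj)
    H.le_normalizer⟩

/-- Let `𝔤` be a finite-dimensional real Lie algebra, `ℋ` a nilpotent Lie
subalgebra, and `h₀ ∈ ℋ`. Suppose there exist linear subspaces `𝒮, 𝒰`, each mapped into itself
by `ad h₀` with `ad h₀` injective on each of them, such that `𝔤 = ℋ ⊕ 𝒮 ⊕ 𝒰` as an internal
direct sum of subspaces. Then `ℋ` is a Cartan subalgebra of `𝔤`. -/
theorem isCartanSubalgebra_of_anosov_splitting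
    (L : Type*) [LieRing L] [LieAlgebra ℝ L] [FiniteDimensional ℝ L]
    (H : LieSubalgebra ℝ L) (hHnil : LieRing.IsNilpotent ↥H)
    (h₀ : L) (hh₀ : h₀ ∈ H) (S U : Submodule ℝ L)
    (hSinv : ∀ s ∈ S, ⁅h₀, s⁆ ∈ S)
    (hSinj : Set.InjOn (fun w => ⁅h₀, w⁆) (S : Set L))
    (hUinv : ∀ u ∈ U, ⁅h₀, u⁆ ∈ U)
    (hUinj : Set.InjOn (fun w => ⁅h₀, w⁆) (U : Set L))
    (hindep : iSupIndep ![H.toSubmodule, S, U])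
    (hsup : H.toSubmodule ⊔ S ⊔ U = ⊤) :
    H.IsCartanSubalgebra :=
  isCartanSubalgebra_of_anosov_splitting_general L H hHnil h₀ hh₀ S U hSinv hSinj hUinv hUinj hindep
    hsup
end

section
/- Let V be a finite-dimensional vector space over a field K and let f be an endomorphism of V whose generalized eigenspaces span V, i.e. the supremum over all μ ∈ K of the generalized μ-eigenspaces of f is all of V. Let W be a linear subspace of V with f(W) ⊆ W, let p : V → V/W be the quotient map, and let f̄ be the endomorphism of V/W induced by f. Then for every μ ∈ K, the generalized μ-eigenspace of f̄ equals the image under p of the generalized μ-eigenspace of f. -/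
/-!
The quotient map `p` intertwines `f` and `f̄`, so it sends each generalized eigenspace of `f` into
the corresponding one of `f̄`. These images span `V/W` because the generalized eigenspaces of `f`
span `V`, while the generalized eigenspaces of `f̄` are independent; in a modular lattice an
independent family that contains, termwise, a family spanning everything must equal it.
-/

namespace Module.End

variable {R M M₂ : Type*} [CommRing R] [AddCommGroup M] [Module R M] [AddCommGroup M₂]
  [Module R M₂]

theorem map_maxGenEigenspace_le_of_comp_eq {f : End R M} {g : End R M₂} {p : M →ₗ[R] M₂}
    (h : g ∘ₗ p = p ∘ₗ f) (μ : R) :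
    (f.maxGenEigenspace μ).map p ≤ g.maxGenEigenspace μ := by
  have hμ : (g - μ • 1) ∘ₗ p = p ∘ₗ (f - μ • 1) := by
    rw [LinearMap.sub_comp, LinearMap.comp_sub, h, LinearMap.smul_comp, LinearMap.comp_smul,
      Module.End.one_eq_id, Module.End.one_eq_id, LinearMap.id_comp, LinearMap.comp_id]
  rintro - ⟨x, hx, rfl⟩
  obtain ⟨k, hk⟩ := (f.mem_maxGenEigenspace μ x).mp hx
  refine (g.mem_maxGenEigenspace μ _).mpr ⟨k, ?_⟩
  rw [← LinearMap.comp_apply, commute_pow_left_of_commute hμ k, LinearMap.comp_apply, hk,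
    map_zero]

end Module.End

theorem quotient_spectral_decomposition_general
    (K : Type*) [Field K] (V : Type*) [AddCommGroup V] [Module K V]
    (f : Module.End K V) (hf : (⨆ μ : K, f.maxGenEigenspace μ) = ⊤)
    (W : Submodule K V) (hW : W ≤ W.comap f) :
    ∀ μ : K,
      Module.End.maxGenEigenspace (W.mapQ W f hW) μ =
        (f.maxGenEigenspace μ).map W.mkQ := by
  set g : Module.End K (V ⧸ W) := W.mapQ W f hW
  have hle : (fun μ ↦ (f.maxGenEigenspace μ).map W.mkQ) ≤ g.maxGenEigenspace :=
    Module.End.map_maxGenEigenspace_le_of_comp_eq (W.mapQ_mkQ W f)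
  have hspan : (⨆ μ, (f.maxGenEigenspace μ).map W.mkQ) = ⊤ := by
    rw [← Submodule.map_iSup, hf, Submodule.map_top, Submodule.range_mkQ]
  intro μ
  exact (congrFun ((g.independent_maxGenEigenspace.le_iff_eq_of_iSup_eq_top hspan).mp hle) μ).symm

/-- Let `V` be a finite-dimensional `K`-vector space and `f` an endomorphism of
`V` whose generalized eigenspaces span `V`. Let `W` be an `f`-invariant subspace, `p : V → V/W`
the quotient map and `f̄` the induced endomorphism of `V/W`. Then for every `μ ∈ K`, the
generalized `μ`-eigenspace of `f̄` equals the image under `p` of the generalized `μ`-eigenspace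
of `f`. -/
theorem quotient_spectral_decomposition
    (K : Type*) [Field K] (V : Type*) [AddCommGroup V] [Module K V] [FiniteDimensional K V]
    (f : Module.End K V) (hf : (⨆ μ : K, f.maxGenEigenspace μ) = ⊤)
    (W : Submodule K V) (hW : W ≤ W.comap f) :
    ∀ μ : K,
      Module.End.maxGenEigenspace (W.mapQ W f hW) μ =
        (f.maxGenEigenspace μ).map W.mkQ :=
  quotient_spectral_decomposition_general K V f hf W hW
end

section
/- Let 𝔤 be a Lie algebra over a field, let 𝒩 be a Lie ideal of 𝔤, and let ℋ be a Lie subalgebra of 𝔤 such that every element of 𝔤 is a sum of an element of 𝒩 and an element of ℋ (i.e. 𝔤 = 𝒩 + ℋ as subspaces). Then the subspace ⁅𝒩, 𝒩⁆ + (ℋ ∩ 𝒩) is a Lie ideal of 𝔤. -/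
namespace LieIdeal

variable {R L : Type*} [CommRing R] [LieRing L] [LieAlgebra R L]

lemma add_lie_mem_lie_sup_inf {N : LieIdeal R L} {H : LieSubalgebra R L} {n h b : L}
    (hn : n ∈ N) (hh : h ∈ H) (hbH : b ∈ H) (hbN : b ∈ N) :
    ⁅n + h, b⁆ ∈ (⁅N, N⁆ : LieIdeal R L).toSubmodule ⊔ (H.toSubmodule ⊓ N.toSubmodule) := by
  rw [add_lie]
  exact Submodule.add_mem_sup (LieSubmodule.lie_mem_lie hn hbN)
    ⟨H.lie_mem hh hbH, N.lie_mem hbN⟩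

end LieIdeal

/-- Let `𝔤` be a Lie algebra over a field, `𝒩` a Lie ideal of `𝔤`, and `ℋ` a
Lie subalgebra with `𝔤 = 𝒩 + ℋ` as subspaces. Then the subspace `⁅𝒩, 𝒩⁆ + (ℋ ∩ 𝒩)` is a Lie
ideal of `𝔤`, i.e. it is stable under bracketing with arbitrary elements of `𝔤`. -/
theorem commutator_sup_inter_isIdeal
    (K : Type*) [Field K] (L : Type*) [LieRing L] [LieAlgebra K L]
    (N : LieIdeal K L) (H : LieSubalgebra K L)
    (hsum : ∀ x : L, ∃ n ∈ N, ∃ h ∈ H, x = n + h) :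
    ∀ x : L, ∀ y ∈ (LieSubmodule.toSubmodule ⁅N, N⁆ ⊔ (H.toSubmodule ⊓ N.toSubmodule) :
        Submodule K L),
      ⁅x, y⁆ ∈ (LieSubmodule.toSubmodule ⁅N, N⁆ ⊔ (H.toSubmodule ⊓ N.toSubmodule) :
        Submodule K L) := by
  intro x y hy
  obtain ⟨a, ha, b, ⟨hbH, hbN⟩, rfl⟩ := Submodule.mem_sup.mp hy
  obtain ⟨n, hn, h, hh, rfl⟩ := hsum x
  rw [lie_add]
  exact add_mem (Submodule.mem_sup_left ((⁅N, N⁆ : LieIdeal K L).lie_mem ha))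
    (LieIdeal.add_lie_mem_lie_sup_inf hn hh hbH hbN)
end

section
/- Let Ĝ be a group, H₀ a subgroup of Ĝ contained in the center of Ĝ, and Γ̂, K̂ subgroups of Ĝ. Assume the following freeness condition: for all γ̂ ∈ Γ̂ and ĝ ∈ Ĝ, if γ̂ ∈ ĝ K̂ H₀ ĝ⁻¹ then γ̂ ∈ H₀. Then for every h ∈ H₀ and ĝ ∈ Ĝ, if there exist γ̂ ∈ Γ̂ and k̂ ∈ K̂ with ĝ h = γ̂ ĝ k̂, then h = a·b for some a ∈ Γ̂ ∩ H₀ and some b ∈ K̂ ∩ H₀. -/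
/-! A fixed point `g h = γ g k` with `h` central exhibits `γ = g k⁻¹ h g⁻¹` as an element of
`g K H₀ g⁻¹`, so freeness puts `γ` in `H₀`. Then `γ` is central too, the equation collapses to
`h = γ k`, and `k = γ⁻¹ h` lies in `H₀` as well. -/

namespace Subgroup

variable {G : Type*} [Group G] {g h γ k : G}

theorem eq_conj_mul_of_mul_eq_of_mem_center (hh : h ∈ center G) (heq : g * h = γ * g * k) :
    γ = g * k⁻¹ * h * g⁻¹ := by
  have hcomm : k⁻¹ * h = h * k⁻¹ := mem_center_iff.mp hh k⁻¹
  rw [mul_assoc g, hcomm, ← mul_assoc, heq]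
  group

theorem eq_mul_of_mul_eq_of_mem_center (hγ : γ ∈ center G) (heq : g * h = γ * g * k) :
    h = γ * k := by
  have hcomm : g * γ = γ * g := mem_center_iff.mp hγ g
  rw [← hcomm, mul_assoc] at heq
  exact mul_left_cancel heq

end Subgroup

/-- Let `Ĝ` be a group, `H₀` a central subgroup, and `Γ̂, K̂` subgroups.
Assume that for all `γ̂ ∈ Γ̂` and `ĝ ∈ Ĝ`, if `γ̂ ∈ ĝ K̂ H₀ ĝ⁻¹` then `γ̂ ∈ H₀`. Then for every
`h ∈ H₀` and `ĝ ∈ Ĝ`, if there are `γ̂ ∈ Γ̂` and `k̂ ∈ K̂` with `ĝ h = γ̂ ĝ k̂`, then `h = a * b`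
with `a ∈ Γ̂ ∩ H₀` and `b ∈ K̂ ∩ H₀`. -/
theorem central_fixing_element_in_lattice
    (G : Type*) [Group G] (H₀ Γ K : Subgroup G)
    (hcentral : H₀ ≤ Subgroup.center G)
    (hfree : ∀ γ ∈ Γ, ∀ g : G, (∃ k ∈ K, ∃ h ∈ H₀, γ = g * k * h * g⁻¹) → γ ∈ H₀)
    (h : G) (hh : h ∈ H₀) (g : G)
    (hex : ∃ γ ∈ Γ, ∃ k ∈ K, g * h = γ * g * k) :
    ∃ a ∈ Γ ⊓ H₀, ∃ b ∈ K ⊓ H₀, h = a * b := by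
  obtain ⟨γ, hγΓ, k, hkK, heq⟩ := hex
  have hγH : γ ∈ H₀ := hfree γ hγΓ g
    ⟨k⁻¹, inv_mem hkK, h, hh, Subgroup.eq_conj_mul_of_mul_eq_of_mem_center (hcentral hh) heq⟩
  have hfac : h = γ * k := Subgroup.eq_mul_of_mul_eq_of_mem_center (hcentral hγH) heq
  have hkH : k ∈ H₀ := (H₀.mul_mem_cancel_left hγH).mp (hfac ▸ hh)
  exact ⟨γ, ⟨hγΓ, hγH⟩, k, ⟨hkK, hkH⟩, hfac⟩
end
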